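/- Let λ ∈ ℝ and α > −1, and define μ on ℝ^{d+1}_+ by dμ = ω dm where ω(x,t) = t^α log^λ(4/t) for 0 < t ≤ 1 and ω(x,t) = log^λ 4 for t > 1. Then μ is a doubling measure on ℝ^{d+1}_+: there exists C ≥ 1 such that μ(B(x,2r) ∩ ℝ^{d+1}_+) ≤ C μ(B(x,r) ∩ ℝ^{d+1}_+) for all x ∈ ℝ^{d+1}_+ and r > 0. -/

import Mathlib

open MeasureTheory Real Set

/-- The weight `ω(x,t) = t^α (log (4/t))^λ` for `0 < t ≤ 1`, `= (log 4)^λ` for `t > 1`. -/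
noncomputable def upperWeight (d : ℕ) (a l : ℝ) (y : EuclideanSpace ℝ (Fin (d + 1))) : ℝ :=
  if y (Fin.last d) ≤ 1 then
    (y (Fin.last d)) ^ a * (Real.log (4 / y (Fin.last d))) ^ l
  else (Real.log 4) ^ l

/-
Write the weight as `ω(y) = w(y_{d+1})` with `w(t) = f(min t 1)` and `f(t) = t^α log^λ(4/t)`.
Since `log(4/t)` varies more slowly than any power, for `0 < u ≤ v` the ratio `w(v)/w(u)` lies
between `(v/u)^(-β)` and `(v/u)^δ` up to constants, where one can take `β < 1` because `α > -1`.
So `w` is comparable to a constant on every interval `[u, M u]`, and `∫₀^v w ≲ v w(v)`.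
Together these make `w(t) dt` doubling on the intervals `(max (t - s) 0, t + s)`: when the
interval stays away from `0` the weight is essentially constant on it, and otherwise both
intervals have mass comparable to `s w(s)`. Boxes squeezed between `B(x, r) ∩ ℝ^{d+1}_+` and
`B(x, 2r) ∩ ℝ^{d+1}_+`, together with Fubini, lift this to the half space.
-/

open scoped ENNReal

section HalfLine

variable {w : ℝ → ℝ} {K β δ : ℝ}

lemma comparable_of_ratio_bounds (hK : 0 ≤ K) (hδ : 0 ≤ δ) (hβ : 0 ≤ β)
    (hw0 : ∀ t, 0 < t → 0 ≤ w t)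
    (hw : ∀ u v, 0 < u → u ≤ v → w v ≤ K * (v / u) ^ δ * w u ∧ w u ≤ K * (v / u) ^ β * w v)
    {M : ℝ} (hM : 1 ≤ M) {u v : ℝ} (hu : 0 < u) (huv : u ≤ v) (hvM : v ≤ M * u) :
    w v ≤ K * M ^ (β + δ) * w u ∧ w u ≤ K * M ^ (β + δ) * w v := by
  have hρ1 : 1 ≤ v / u := (one_le_div hu).2 huv
  have hρM : v / u ≤ M := (div_le_iff₀ hu).2 hvM
  have hwu := hw0 u hu
  have hwv := hw0 v (hu.trans_le huv)
  obtain ⟨hup, hdown⟩ := hw u v hu huv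
  refine ⟨hup.trans ?_, hdown.trans ?_⟩
  · calc K * (v / u) ^ δ * w u ≤ K * M ^ δ * w u := by gcongr
      _ ≤ K * M ^ (β + δ) * w u := by gcongr; linarith
  · calc K * (v / u) ^ β * w v ≤ K * M ^ β * w v := by gcongr
      _ ≤ K * M ^ (β + δ) * w v := by gcongr; linarith

lemma setLIntegral_Ioo_zero_rpow {g v : ℝ} (hg : -1 < g) (hv : 0 < v) :
    ∫⁻ t in Ioo 0 v, ENNReal.ofReal (t ^ g) = ENNReal.ofReal (v ^ (g + 1) / (g + 1)) := by
  have hint : IntegrableOn (fun t : ℝ => t ^ g) (Ioo 0 v) :=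
    (intervalIntegrable_iff_integrableOn_Ioo_of_le hv.le).1
      (intervalIntegral.intervalIntegrable_rpow' hg)
  rw [← ofReal_integral_eq_lintegral_ofReal hint
    (ae_restrict_of_forall_mem measurableSet_Ioo fun t ht => rpow_nonneg ht.1.le g),
    ← integral_Ioc_eq_integral_Ioo, ← intervalIntegral.integral_of_le hv.le,
    integral_rpow (Or.inl hg), zero_rpow (by linarith), sub_zero]

lemma setLIntegral_Ioo_zero_le_of_ratio_le (hK : 0 ≤ K) (hβ : β < 1) (hw0 : ∀ t, 0 < t → 0 ≤ w t)
    (hw : ∀ u v, 0 < u → u ≤ v → w u ≤ K * (v / u) ^ β * w v) {v : ℝ} (hv : 0 < v) :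
    ∫⁻ t in Ioo 0 v, ENNReal.ofReal (w t) ≤ ENNReal.ofReal (K / (1 - β) * (v * w v)) := by
  set c := K * w v * v ^ β
  have hc : 0 ≤ c := mul_nonneg (mul_nonneg hK (hw0 v hv)) (rpow_nonneg hv.le β)
  calc ∫⁻ t in Ioo 0 v, ENNReal.ofReal (w t)
      ≤ ∫⁻ t in Ioo 0 v, ENNReal.ofReal c * ENNReal.ofReal (t ^ (-β)) := by
        refine setLIntegral_mono' measurableSet_Ioo fun t ht => ?_
        rw [← ENNReal.ofReal_mul hc]
        refine ENNReal.ofReal_le_ofReal ((hw t v ht.1 ht.2.le).trans_eq ?_)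
        rw [div_rpow hv.le ht.1.le, rpow_neg ht.1.le]
        ring
    _ = ENNReal.ofReal c * ENNReal.ofReal (v ^ (-β + 1) / (-β + 1)) := by
        rw [lintegral_const_mul' _ _ ENNReal.ofReal_ne_top,
          setLIntegral_Ioo_zero_rpow (by linarith) hv]
    _ = ENNReal.ofReal (K / (1 - β) * (v * w v)) := by
        rw [← ENNReal.ofReal_mul hc, rpow_add hv, rpow_neg hv.le, rpow_one]
        congr 1
        field_simp
        ring

variable {S : Set ℝ} {c : ℝ}

lemma setLIntegral_ofReal_le_of_le (h : ∀ t ∈ S, w t ≤ c) :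
    ∫⁻ t in S, ENNReal.ofReal (w t) ≤ ENNReal.ofReal c * volume S := by
  rw [← setLIntegral_const]
  exact setLIntegral_mono measurable_const fun t ht => ENNReal.ofReal_le_ofReal (h t ht)

lemma le_setLIntegral_ofReal_of_le (hS : MeasurableSet S) (h : ∀ t ∈ S, c ≤ w t) :
    ENNReal.ofReal c * volume S ≤ ∫⁻ t in S, ENNReal.ofReal (w t) := by
  rw [← setLIntegral_const]
  exact setLIntegral_mono' hS fun t ht => ENNReal.ofReal_le_ofReal (h t ht)

lemma setLIntegral_Ioo_max_le_of_comparable {A B κ : ℝ} (hA : 0 < A) (hB : 0 ≤ B) (hκ : 1 ≤ κ)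
    (hcomp : ∀ u v, 0 < u → u ≤ v → v ≤ 6 * κ * u → w v ≤ A * w u ∧ w u ≤ A * w v)
    (hint : ∀ v, 0 < v → ∫⁻ t in Ioo 0 v, ENNReal.ofReal (w t) ≤ ENNReal.ofReal (B * (v * w v)))
    {t₀ s : ℝ} (ht₀ : 0 < t₀) (hs : 0 < s) :
    ∫⁻ t in Ioo (max (t₀ - κ * s) 0) (t₀ + κ * s), ENNReal.ofReal (w t) ≤
      ENNReal.ofReal (max (κ * A ^ 2) (6 * κ * B * A)) *
        ∫⁻ t in Ioo (max (t₀ - s) 0) (t₀ + s), ENNReal.ofReal (w t) := by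
  have hsub : Ioo (max (t₀ - s) 0) (t₀ + s) ⊆ Ioo (max (t₀ - κ * s) 0) (t₀ + κ * s) := by
    gcongr <;> nlinarith
  rcases le_or_gt (2 * κ * s) t₀ with hfar | hnear
  · -- away from the boundary `w` is comparable to `w t₀` on the larger interval
    rw [max_eq_left (b := 0) (by nlinarith : 0 ≤ t₀ - κ * s),
      max_eq_left (b := 0) (by nlinarith : 0 ≤ t₀ - s)] at hsub ⊢
    have hbig : ∀ t ∈ Ioo (t₀ - κ * s) (t₀ + κ * s), w t ≤ A * w t₀ ∧ w t₀ ≤ A * w t := by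
      rintro t ⟨ht1, ht2⟩
      rcases le_total t t₀ with h | h
      · exact (hcomp t t₀ (by nlinarith) h (by nlinarith)).symm
      · exact hcomp t₀ t ht₀ h (by nlinarith)
    have hupper := setLIntegral_ofReal_le_of_le fun t ht => (hbig t ht).1
    have hlower := le_setLIntegral_ofReal_of_le (c := w t₀ / A) measurableSet_Ioo
      fun t ht => (div_le_iff₀' hA).2 (hbig t (hsub ht)).2
    rw [Real.volume_Ioo] at hupper hlower
    refine hupper.trans ((le_of_eq ?_).trans (mul_le_mul' (ENNReal.ofReal_le_ofReal
      (le_max_left _ _)) hlower))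
    rw [← ENNReal.ofReal_mul' (by nlinarith), ← ENNReal.ofReal_mul' (by linarith),
      ← ENNReal.ofReal_mul (by positivity)]
    congr 1
    field_simp
    ring
  · -- near the boundary the larger interval lies in `(0, 3κs)`, where `hint` applies, and the
    -- smaller one contains an interval of length `s / 2` on which `w` is comparable to `w (3κs)`
    set m := max (t₀ - s / 2) (s / 2)
    have hupper : ∫⁻ t in Ioo (max (t₀ - κ * s) 0) (t₀ + κ * s), ENNReal.ofReal (w t) ≤
        ENNReal.ofReal (B * (3 * κ * s * w (3 * κ * s))) :=
      (lintegral_mono_set (Ioo_subset_Ioo (le_max_right _ _) (by nlinarith))).trans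
        (hint _ (by positivity))
    have hsub' : Ioo m (m + s / 2) ⊆ Ioo (max (t₀ - s) 0) (t₀ + s) := by
      apply Ioo_subset_Ioo
      · exact max_le (by linarith [le_max_left (t₀ - s / 2) (s / 2)])
          (by linarith [le_max_right (t₀ - s / 2) (s / 2)])
      · linarith [max_le (by linarith : t₀ - s / 2 ≤ t₀ + s / 2) (by linarith : s / 2 ≤ t₀ + s / 2)]
    have hlower := le_setLIntegral_ofReal_of_le (c := w (3 * κ * s) / A) measurableSet_Ioo
      fun t (ht : t ∈ Ioo m (m + s / 2)) => by
        have ht1 : s / 2 < t := (le_max_right _ _).trans_lt ht.1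
        have ht2 : t ≤ 3 * κ * s := by
          nlinarith [ht.2, max_le (by linarith : t₀ - s / 2 ≤ 2 * κ * s)
            (by nlinarith : s / 2 ≤ 2 * κ * s)]
        exact (div_le_iff₀' hA).2 (hcomp t _ (by linarith) ht2 (by nlinarith)).1
    rw [Real.volume_Ioo, add_sub_cancel_left] at hlower
    refine hupper.trans ((le_of_eq ?_).trans (mul_le_mul' (ENNReal.ofReal_le_ofReal
      (le_max_right _ _)) (hlower.trans (lintegral_mono_set hsub'))))
    rw [← ENNReal.ofReal_mul' (by linarith), ← ENNReal.ofReal_mul (by positivity)]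
    congr 1
    field_simp
    ring

end HalfLine

section HalfSpace

variable {ι : Type*} [Fintype ι]

lemma setLIntegral_univ_pi_comp_eval [DecidableEq ι] (I : ι → Set ℝ) (j : ι) {W : ℝ → ℝ≥0∞}
    (hW : Measurable W) :
    ∫⁻ y in univ.pi I, W (y j) = (∏ i ∈ Finset.univ.erase j, volume (I i)) * ∫⁻ t in I j, W t := by
  rw [volume_pi, Measure.restrict_pi_pi, ← lintegral_map hW (measurable_pi_apply j),
    Measure.pi_map_eval, lintegral_smul_measure]
  simp only [Measure.restrict_apply_univ, smul_eq_mul]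

noncomputable def halfSpaceBox [DecidableEq ι] (j : ι) (x : EuclideanSpace ℝ ι) (s : ℝ) :
    Set (EuclideanSpace ℝ ι) :=
  WithLp.ofLp ⁻¹' univ.pi
    (Function.update (fun i => Ioo (x i - s) (x i + s)) j (Ioo (max (x j - s) 0) (x j + s)))

lemma setLIntegral_halfSpaceBox [DecidableEq ι] (j : ι) {W : ℝ → ℝ≥0∞} (hW : Measurable W)
    (x : EuclideanSpace ℝ ι) (s : ℝ) :
    ∫⁻ y in halfSpaceBox j x s, W (y j) =
      ENNReal.ofReal (2 * s) ^ (Fintype.card ι - 1) *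
        ∫⁻ t in Ioo (max (x j - s) 0) (x j + s), W t := by
  rw [halfSpaceBox, (PiLp.volume_preserving_ofLp ι).setLIntegral_comp_preimage_emb
    (MeasurableEquiv.toLp 2 (ι → ℝ)).symm.measurableEmbedding (fun z => W (z j)),
    setLIntegral_univ_pi_comp_eval _ j hW, Function.update_self,
    ← Finset.card_univ, ← Finset.card_erase_of_mem (Finset.mem_univ j), ← Finset.prod_const]
  congr 1
  refine Finset.prod_congr rfl fun i hi => ?_
  rw [Function.update_of_ne (Finset.ne_of_mem_erase hi), Real.volume_Ioo]
  ring_nf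

lemma ball_inter_subset_halfSpaceBox [DecidableEq ι] (j : ι) (x : EuclideanSpace ℝ ι) (r : ℝ) :
    Metric.ball x r ∩ {y | 0 < y j} ⊆ halfSpaceBox j x r := by
  rintro y ⟨hy, hyj⟩ i -
  have hi : |y i - x i| < r := (PiLp.dist_apply_le y x i).trans_lt hy
  rw [abs_lt] at hi
  rcases eq_or_ne i j with rfl | hij
  · rw [Function.update_self]
    exact ⟨max_lt (by linarith) hyj, by linarith⟩
  · rw [Function.update_of_ne hij]
    exact ⟨by linarith, by linarith⟩

lemma halfSpaceBox_subset_ball_inter [DecidableEq ι] (j : ι) (x : EuclideanSpace ℝ ι) {r s : ℝ}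
    (hs : 0 ≤ s) (hsr : √(Fintype.card ι) * s < r) :
    halfSpaceBox j x s ⊆ Metric.ball x r ∩ {y | 0 < y j} := by
  intro y hy
  have hcoord (i : ι) : y i ∈ Ioo (x i - s) (x i + s) := by
    have := hy i (mem_univ i)
    rcases eq_or_ne i j with rfl | hij
    · rw [Function.update_self] at this
      exact ⟨(le_max_left _ _).trans_lt this.1, this.2⟩
    · rwa [Function.update_of_ne hij] at this
  have hyj : 0 < y j := by
    have := hy j (mem_univ j)
    rw [Function.update_self] at this
    exact (le_max_right _ _).trans_lt this.1
  refine ⟨?_, hyj⟩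
  rw [Metric.mem_ball, EuclideanSpace.dist_eq]
  calc √(∑ i, dist (y i) (x i) ^ 2) ≤ √(∑ _i : ι, s ^ 2) := by
        gcongr with i
        exact abs_le.2 ⟨by linarith [(hcoord i).1], by linarith [(hcoord i).2]⟩
    _ = √(Fintype.card ι) * s := by
        rw [Finset.sum_const, Finset.card_univ, nsmul_eq_mul, sqrt_mul (by positivity),
          sqrt_sq hs]
    _ < r := hsr

theorem setLIntegral_ball_inter_halfSpace_le (j : ι) {W : ℝ → ℝ≥0∞} (hW : Measurable W)
    {κ C : ℝ} (hκ : 2 * √(Fintype.card ι) < κ)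
    (hdoubling : ∀ t₀ s, 0 < t₀ → 0 < s →
      ∫⁻ t in Ioo (max (t₀ - κ * s) 0) (t₀ + κ * s), W t ≤
        ENNReal.ofReal C * ∫⁻ t in Ioo (max (t₀ - s) 0) (t₀ + s), W t)
    {x : EuclideanSpace ℝ ι} (hx : 0 < x j) {r : ℝ} (hr : 0 < r) :
    ∫⁻ y in Metric.ball x (2 * r) ∩ {y | 0 < y j}, W (y j) ≤
      ENNReal.ofReal (κ ^ (Fintype.card ι - 1) * C) *
        ∫⁻ y in Metric.ball x r ∩ {y | 0 < y j}, W (y j) := by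
  classical
  have hκ0 : 0 < κ := (by positivity : 0 ≤ 2 * √(Fintype.card ι)).trans_lt hκ
  set s := 2 * r / κ
  have hs : 0 < s := by positivity
  have h2r : 2 * r = κ * s := by simp only [s]; field_simp
  have hsr : √(Fintype.card ι) * s < r := by
    rw [← mul_lt_mul_iff_of_pos_left hκ0]
    nlinarith
  calc ∫⁻ y in Metric.ball x (2 * r) ∩ {y | 0 < y j}, W (y j)
      ≤ ∫⁻ y in halfSpaceBox j x (κ * s), W (y j) :=
        lintegral_mono_set (h2r ▸ ball_inter_subset_halfSpaceBox j x (2 * r))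
    _ ≤ ENNReal.ofReal (2 * (κ * s)) ^ (Fintype.card ι - 1) *
          (ENNReal.ofReal C * ∫⁻ t in Ioo (max (x j - s) 0) (x j + s), W t) := by
        rw [setLIntegral_halfSpaceBox j hW x]
        gcongr
        exact hdoubling _ _ hx hs
    _ = ENNReal.ofReal (κ ^ (Fintype.card ι - 1) * C) *
          ∫⁻ y in halfSpaceBox j x s, W (y j) := by
        rw [setLIntegral_halfSpaceBox j hW x s, mul_left_comm 2, ENNReal.ofReal_mul hκ0.le,
          mul_pow, ENNReal.ofReal_mul (pow_nonneg hκ0.le _), ENNReal.ofReal_pow hκ0.le]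
        ring
    _ ≤ ENNReal.ofReal (κ ^ (Fintype.card ι - 1) * C) *
          ∫⁻ y in Metric.ball x r ∩ {y | 0 < y j}, W (y j) := by
        gcongr
        exact halfSpaceBox_subset_ball_inter j x hs.le hsr

end HalfSpace

noncomputable def powLogWeight (a l t : ℝ) : ℝ := t ^ a * Real.log (4 / t) ^ l

lemma upperWeight_eq_powLogWeight_min (d : ℕ) (a l : ℝ) (y : EuclideanSpace ℝ (Fin (d + 1))) :
    upperWeight d a l y = powLogWeight a l (min (y (Fin.last d)) 1) := by
  unfold upperWeight powLogWeight
  split_ifs with h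
  · rw [min_eq_left h]
  · rw [min_eq_right (le_of_not_ge h), one_rpow, one_mul, div_one]

lemma one_le_log_four_div {t : ℝ} (ht : 0 < t) (ht1 : t ≤ 1) : 1 ≤ Real.log (4 / t) := by
  have h4 : (4 : ℝ) ≤ 4 / t := by rw [le_div_iff₀ ht]; linarith
  have he : exp 1 ≤ 4 := (exp_one_lt_d9.trans (by norm_num)).le
  rw [le_log_iff_exp_le (by positivity)]
  exact he.trans h4

lemma powLogWeight_pos (a l : ℝ) {t : ℝ} (ht : 0 < t) (ht1 : t ≤ 1) : 0 < powLogWeight a l t :=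
  mul_pos (rpow_pos_of_pos ht a) (rpow_pos_of_pos (by linarith [one_le_log_four_div ht ht1]) l)

lemma exists_one_add_log_rpow_le {p η : ℝ} (hp : 0 ≤ p) (hη : 0 < η) :
    ∃ K, 1 ≤ K ∧ ∀ x : ℝ, 1 ≤ x → (1 + Real.log x) ^ p ≤ K * x ^ η := by
  set c := η / (p + 1)
  have hc : 0 < c := by positivity
  refine ⟨(1 + 1 / c) ^ p, one_le_rpow (by simp [hc.le]) hp, fun x hx => ?_⟩
  have hxc : 1 ≤ x ^ c := one_le_rpow hx hc.le
  have hlog : 1 + Real.log x ≤ (1 + 1 / c) * x ^ c := by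
    have := log_le_rpow_div (by linarith : (0 : ℝ) ≤ x) hc
    rw [div_eq_mul_one_div] at this
    nlinarith
  have hcp : c * p ≤ η := by
    rw [div_mul_eq_mul_div, div_le_iff₀ (by positivity)]; nlinarith
  calc (1 + Real.log x) ^ p ≤ ((1 + 1 / c) * x ^ c) ^ p :=
        rpow_le_rpow (by linarith [log_nonneg hx]) hlog hp
    _ = (1 + 1 / c) ^ p * x ^ (c * p) := by
        rw [mul_rpow (by positivity) (by positivity), ← rpow_mul (by linarith)]
    _ ≤ (1 + 1 / c) ^ p * x ^ η := by gcongr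

lemma rpow_le_rpow_mul_of_le_mul {x y m : ℝ} (l : ℝ) (hx : 0 < x) (hxy : x ≤ y)
    (hym : y ≤ m * x) : x ^ l ≤ m ^ |l| * y ^ l ∧ y ^ l ≤ m ^ |l| * x ^ l := by
  have hy : 0 < y := hx.trans_le hxy
  have hm : 1 ≤ m := by nlinarith
  have hm0 : 0 < m := by linarith
  rcases le_total 0 l with hl | hl
  · rw [abs_of_nonneg hl]
    refine ⟨?_, ?_⟩
    · calc x ^ l ≤ y ^ l := rpow_le_rpow hx.le hxy hl
        _ ≤ m ^ l * y ^ l := le_mul_of_one_le_left (by positivity) (one_le_rpow hm hl)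
    · calc y ^ l ≤ (m * x) ^ l := rpow_le_rpow hy.le hym hl
        _ = m ^ l * x ^ l := mul_rpow hm0.le hx.le
  · rw [abs_of_nonpos hl]
    refine ⟨?_, ?_⟩
    · calc x ^ l ≤ (y / m) ^ l :=
            rpow_le_rpow_of_nonpos (by positivity) (by rwa [div_le_iff₀' hm0]) hl
        _ = m ^ (-l) * y ^ l := by
            rw [div_rpow hy.le hm0.le, rpow_neg hm0.le]; ring
    · calc y ^ l ≤ x ^ l := rpow_le_rpow_of_nonpos hx hxy hl
        _ ≤ m ^ (-l) * x ^ l :=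
            le_mul_of_one_le_left (by positivity) (one_le_rpow hm (by linarith))

lemma log_four_div_le_one_add_log_mul {u v : ℝ} (hu : 0 < u) (huv : u ≤ v) (hv1 : v ≤ 1) :
    Real.log (4 / u) ≤ (1 + Real.log (v / u)) * Real.log (4 / v) := by
  have hv : 0 < v := hu.trans_le huv
  have hsplit : Real.log (4 / u) = Real.log (4 / v) + Real.log (v / u) := by
    rw [← log_mul (by positivity) (by positivity)]; congr 1; field_simp
  have := one_le_log_four_div hv hv1
  nlinarith [log_nonneg ((one_le_div hu).2 huv)]

lemma exists_powLogWeight_ratio_bounds (l : ℝ) {a δ β : ℝ} (hδ : a < δ) (hβ : -a < β) :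
    ∃ K, 1 ≤ K ∧ ∀ u v : ℝ, 0 < u → u ≤ v → v ≤ 1 →
      powLogWeight a l v ≤ K * (v / u) ^ δ * powLogWeight a l u ∧
      powLogWeight a l u ≤ K * (v / u) ^ β * powLogWeight a l v := by
  set η := min (δ - a) (β + a)
  obtain ⟨K, hK, hlog⟩ := exists_one_add_log_rpow_le (abs_nonneg l)
    (lt_min (sub_pos.2 hδ) (neg_lt_iff_pos_add.1 hβ) : 0 < η)
  refine ⟨K, hK, fun u v hu huv hv1 => ?_⟩
  have hv : 0 < v := hu.trans_le huv
  set ρ := v / u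
  have hρ : 1 ≤ ρ := (one_le_div hu).2 huv
  have hm := hlog ρ hρ
  have hLu1 := one_le_log_four_div hu (huv.trans hv1)
  have hLv1 := one_le_log_four_div hv hv1
  have hLu0 : 0 ≤ Real.log (4 / u) ^ l := rpow_nonneg (by linarith) l
  have hLv0 : 0 ≤ Real.log (4 / v) ^ l := rpow_nonneg (by linarith) l
  obtain ⟨hLv, hLu⟩ := rpow_le_rpow_mul_of_le_mul l (by linarith)
    (log_le_log (by positivity) (div_le_div_of_nonneg_left (by norm_num) hu huv))
    (log_four_div_le_one_add_log_mul hu huv hv1)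
  have hva : v ^ a = ρ ^ a * u ^ a := by
    rw [← mul_rpow (by positivity) hu.le, div_mul_cancel₀ v hu.ne']
  have hua : u ^ a = ρ ^ (-a) * v ^ a := by
    rw [hva, ← mul_assoc, ← rpow_add (by positivity), neg_add_cancel, rpow_zero, one_mul]
  unfold powLogWeight
  constructor
  · calc v ^ a * Real.log (4 / v) ^ l
        ≤ ρ ^ a * u ^ a * ((1 + Real.log ρ) ^ |l| * Real.log (4 / u) ^ l) := by
          rw [hva]; gcongr
      _ ≤ ρ ^ a * u ^ a * (K * ρ ^ η * Real.log (4 / u) ^ l) := by gcongr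
      _ = K * ρ ^ (a + η) * (u ^ a * Real.log (4 / u) ^ l) := by
          rw [rpow_add (by positivity)]; ring
      _ ≤ K * ρ ^ δ * (u ^ a * Real.log (4 / u) ^ l) := by
          gcongr; linarith [min_le_left (δ - a) (β + a)]
  · calc u ^ a * Real.log (4 / u) ^ l
        ≤ ρ ^ (-a) * v ^ a * ((1 + Real.log ρ) ^ |l| * Real.log (4 / v) ^ l) := by
          rw [hua]; gcongr
      _ ≤ ρ ^ (-a) * v ^ a * (K * ρ ^ η * Real.log (4 / v) ^ l) := by gcongr
      _ = K * ρ ^ (-a + η) * (v ^ a * Real.log (4 / v) ^ l) := by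
          rw [rpow_add (by positivity)]; ring
      _ ≤ K * ρ ^ β * (v ^ a * Real.log (4 / v) ^ l) := by
          gcongr; linarith [min_le_right (δ - a) (β + a)]

lemma min_one_div_min_one_le {u v : ℝ} (hu : 0 < u) (huv : u ≤ v) :
    min v 1 / min u 1 ≤ v / u := by
  rcases le_total v 1 with hv | hv
  · rw [min_eq_left hv, min_eq_left (huv.trans hv)]
  rcases le_total u 1 with hu1 | hu1
  · rw [min_eq_right hv, min_eq_left hu1]; gcongr
  · rw [min_eq_right hv, min_eq_right hu1, div_one, one_le_div hu]; exact huv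

lemma ratio_bounds_comp_min_one {f : ℝ → ℝ} {K δ β : ℝ} (hK : 0 ≤ K) (hδ : 0 ≤ δ) (hβ : 0 ≤ β)
    (hf0 : ∀ t, 0 < t → t ≤ 1 → 0 ≤ f t)
    (hf : ∀ u v, 0 < u → u ≤ v → v ≤ 1 →
      f v ≤ K * (v / u) ^ δ * f u ∧ f u ≤ K * (v / u) ^ β * f v)
    {u v : ℝ} (hu : 0 < u) (huv : u ≤ v) :
    f (min v 1) ≤ K * (v / u) ^ δ * f (min u 1) ∧
      f (min u 1) ≤ K * (v / u) ^ β * f (min v 1) := by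
  have hu' : 0 < min u 1 := lt_min hu one_pos
  have hv' : 0 < min v 1 := hu'.trans_le (min_le_min_right 1 huv)
  obtain ⟨hup, hdown⟩ := hf _ _ hu' (min_le_min_right 1 huv) (min_le_right v 1)
  have hρ := min_one_div_min_one_le hu huv
  have hf0u := hf0 _ hu' (min_le_right u 1)
  have hf0v := hf0 _ hv' (min_le_right v 1)
  exact ⟨hup.trans (by gcongr), hdown.trans (by gcongr)⟩

lemma measurable_powLogWeight_min_one (a l : ℝ) :
    Measurable fun t => powLogWeight a l (min t 1) := by
  unfold powLogWeight; fun_prop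

lemma exists_setLIntegral_Ioo_max_powLogWeight_le (l : ℝ) {a : ℝ} (ha : -1 < a) {κ : ℝ}
    (hκ : 1 ≤ κ) :
    ∃ C, 1 ≤ C ∧ ∀ t₀ s, 0 < t₀ → 0 < s →
      ∫⁻ t in Ioo (max (t₀ - κ * s) 0) (t₀ + κ * s), ENNReal.ofReal (powLogWeight a l (min t 1)) ≤
        ENNReal.ofReal C *
          ∫⁻ t in Ioo (max (t₀ - s) 0) (t₀ + s), ENNReal.ofReal (powLogWeight a l (min t 1)) := by
  -- any `δ > a` and `β ∈ (-a, 1)` would do; the latter interval is nonempty since `a > -1`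
  set δ := |a| + 1
  set β := max ((1 - a) / 2) 0
  have hδ : 0 ≤ δ := by positivity
  have hβ : 0 ≤ β := le_max_right _ _
  have hβ1 : β < 1 := max_lt (by linarith) one_pos
  obtain ⟨K, hK, hf⟩ := exists_powLogWeight_ratio_bounds l (by linarith [le_abs_self a] : a < δ)
    (lt_max_of_lt_left (by linarith) : -a < β)
  have hf0 (t : ℝ) (ht : 0 < t) (ht1 : t ≤ 1) := (powLogWeight_pos a l ht ht1).le
  have hw0 (t : ℝ) (ht : 0 < t) := hf0 (min t 1) (lt_min ht one_pos) (min_le_right t 1)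
  have hw (u v : ℝ) (hu : 0 < u) (huv : u ≤ v) :=
    ratio_bounds_comp_min_one (by linarith) hδ hβ hf0 hf hu huv
  set A := K * (6 * κ) ^ (β + δ)
  have hA : 1 ≤ A := one_le_mul_of_one_le_of_one_le hK (one_le_rpow (by linarith) (by positivity))
  have hcomp (u v : ℝ) (hu : 0 < u) (huv : u ≤ v) (hv : v ≤ 6 * κ * u) :=
    comparable_of_ratio_bounds (by linarith) hδ hβ hw0 hw (by linarith) hu huv hv
  have hint (v : ℝ) (hv : 0 < v) := setLIntegral_Ioo_zero_le_of_ratio_le (by linarith) hβ1 hw0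
    (fun u v hu huv => (hw u v hu huv).2) hv
  refine ⟨max (κ * A ^ 2) (6 * κ * (K / (1 - β)) * A),
    le_max_of_le_left (one_le_mul_of_one_le_of_one_le hκ (one_le_pow₀ hA)),
    fun t₀ s ht₀ hs => setLIntegral_Ioo_max_le_of_comparable (by linarith)
      (div_nonneg (by linarith) (by linarith)) hκ hcomp hint ht₀ hs⟩

theorem stmt12_general (d : ℕ) (l a : ℝ) (ha : -1 < a) :
    ∃ C : ℝ, 1 ≤ C ∧
      ∀ (x : EuclideanSpace ℝ (Fin (d + 1))) (r : ℝ), 0 < x (Fin.last d) → 0 < r →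
        (∫⁻ y in Metric.ball x (2 * r) ∩ {y : EuclideanSpace ℝ (Fin (d + 1)) | 0 < y (Fin.last d)},
            ENNReal.ofReal (upperWeight d a l y)) ≤
          ENNReal.ofReal C *
            ∫⁻ y in Metric.ball x r ∩ {y : EuclideanSpace ℝ (Fin (d + 1)) | 0 < y (Fin.last d)},
              ENNReal.ofReal (upperWeight d a l y) := by
  set κ := 2 * √(d + 1) + 1
  have hκ : 1 ≤ κ := by simp only [κ]; linarith [sqrt_nonneg (d + 1)]
  obtain ⟨C, hC, hdoubling⟩ := exists_setLIntegral_Ioo_max_powLogWeight_le l ha hκ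
  refine ⟨κ ^ d * C, one_le_mul_of_one_le_of_one_le (one_le_pow₀ hκ) hC, fun x r hx hr => ?_⟩
  simp_rw [upperWeight_eq_powLogWeight_min]
  simpa using setLIntegral_ball_inter_halfSpace_le (Fin.last d)
    (measurable_powLogWeight_min_one a l).ennreal_ofReal (κ := κ) (by simp [κ]) hdoubling hx hr

/-- For `λ ∈ ℝ` and `α > -1`, the measure `dμ = ω dm` with `ω(x,t) = t^α (log (4/t))^λ`
(for `0 < t ≤ 1`, `= (log 4)^λ` for `t > 1`) is doubling on the upper half space
`ℝ^{d+1}_+`. -/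
theorem stmt12 (d : ℕ) (hd : 1 ≤ d) (l a : ℝ) (ha : -1 < a) :
    ∃ C : ℝ, 1 ≤ C ∧
      ∀ (x : EuclideanSpace ℝ (Fin (d + 1))) (r : ℝ), 0 < x (Fin.last d) → 0 < r →
        (∫⁻ y in Metric.ball x (2 * r) ∩ {y : EuclideanSpace ℝ (Fin (d + 1)) | 0 < y (Fin.last d)},
            ENNReal.ofReal (upperWeight d a l y)) ≤
          ENNReal.ofReal C *
            ∫⁻ y in Metric.ball x r ∩ {y : EuclideanSpace ℝ (Fin (d + 1)) | 0 < y (Fin.last d)},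
              ENNReal.ofReal (upperWeight d a l y) :=
  stmt12_general d l a ha
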